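/- arXiv:2212.06620 — 4 statements merged into one kernel-verified Lean document; each statement's English description precedes it below -/
import Mathlib

section
/- Let $y, \hat{l}_1, \hat{l}_2, l_1$ be real with $\hat{l}_1 \neq \hat{l}_2$, $\hat{l}_1 > 0$, and let $w_1^* = (y - 2\hat{l}_2)/(\hat{l}_1 - \hat{l}_2)$ and $g(\hat{l}_1) = \hat{l}_1^2 + \hat{l}_1(y - 3\hat{l}_2 - 2l_1) + 2 l_1 \hat{l}_2$. Then $|w_1^*\hat{l}_1 - l_1| < |\hat{l}_1 - l_1|$ if and only if $(y - \hat{l}_1 - \hat{l}_2)\, g(\hat{l}_1) < 0$. -/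
/-!
Comparing squares, `(w l̂₁ - l₁)² - (l̂₁ - l₁)² = l̂₁ (w - 1)((w + 1) l̂₁ - 2 l₁)`, and at the
optimal weight `w₁*` the factor `(w₁* - 1)((w₁* + 1) l̂₁ - 2 l₁)` equals
`(y - l̂₁ - l̂₂) g(l̂₁) / (l̂₁ - l̂₂)²`. As `l̂₁ > 0`, the weighted estimate is less biased exactly
when `(y - l̂₁ - l̂₂) g(l̂₁) < 0`.
-/

theorem sq_sub_sq_eq_mul_bias (w a c : ℝ) :
    (w * a - c) ^ 2 - (a - c) ^ 2 = a * ((w - 1) * ((w + 1) * a - 2 * c)) := by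
  ring

theorem optimal_weight_bias_identity (y a b c : ℝ) (hab : a ≠ b) :
    ((y - 2 * b) / (a - b) - 1) * (((y - 2 * b) / (a - b) + 1) * a - 2 * c)
      = (y - a - b) * (a ^ 2 + a * (y - 3 * b - 2 * c) + 2 * c * b) / (a - b) ^ 2 := by
  have : a - b ≠ 0 := sub_ne_zero.mpr hab
  field_simp
  ring

theorem stmt_7 (y l1hat l2hat l1 : ℝ) (hne : l1hat ≠ l2hat) (hpos : l1hat > 0)
    (w1 g : ℝ) (hw : w1 = (y - 2 * l2hat) / (l1hat - l2hat))
    (hg : g = l1hat ^ 2 + l1hat * (y - 3 * l2hat - 2 * l1) + 2 * l1 * l2hat) :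
    |w1 * l1hat - l1| < |l1hat - l1| ↔ (y - l1hat - l2hat) * g < 0 := by
  have hd : 0 < (l1hat - l2hat) ^ 2 := sq_pos_of_ne_zero (sub_ne_zero.mpr hne)
  rw [← sq_lt_sq, ← sub_neg, sq_sub_sq_eq_mul_bias, hw,
    optimal_weight_bias_identity y l1hat l2hat l1 hne, ← hg, div_eq_inv_mul]
  exact (smul_neg_iff_of_pos_left hpos).trans (smul_neg_iff_of_pos_left (inv_pos.mpr hd))
end

section
/- Let $y, \hat{l}_1, \hat{l}_2, l_2$ be real with $\hat{l}_1 \neq \hat{l}_2$, $\hat{l}_2 > 0$, and let $w_2^* = 2 - (y - 2\hat{l}_2)/(\hat{l}_1 - \hat{l}_2) = (2\hat{l}_1 - y)/(\hat{l}_1 - \hat{l}_2)$ and $g(\hat{l}_2) = \hat{l}_2^2 + \hat{l}_2(y - 3\hat{l}_1 - 2l_2) + 2 l_2 \hat{l}_1$. Then $|w_2^*\hat{l}_2 - l_2| < |\hat{l}_2 - l_2|$ if and only if $(y - \hat{l}_1 - \hat{l}_2)\, g(\hat{l}_2) < 0$. -/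
/-!
Write `d = l̂₁ - l̂₂`. Comparing the absolute errors amounts to comparing squares, and
`(l̂₂ - l₂)² - (w₂* l̂₂ - l₂)²` factors as the product of the difference
`l̂₂ (1 - w₂*) = l̂₂ (y - l̂₁ - l̂₂) / d` and the sum `l̂₂ (1 + w₂*) - 2 l₂ = -g(l̂₂) / d`.
Since `l̂₂ > 0` and `d² > 0`, its sign is that of `-(y - l̂₁ - l̂₂) g(l̂₂)`.
-/

theorem abs_lt_abs_iff_mul_pos {a b : ℝ} : |a| < |b| ↔ 0 < (b - a) * (b + a) := by
  rw [← sq_lt_sq, ← sub_pos, sq_sub_sq, mul_comm]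

theorem stmt_8 (y l1hat l2hat l2 : ℝ) (hne : l1hat ≠ l2hat) (hpos : l2hat > 0)
    (w2 g : ℝ) (hw : w2 = (2 * l1hat - y) / (l1hat - l2hat))
    (hg : g = l2hat ^ 2 + l2hat * (y - 3 * l1hat - 2 * l2) + 2 * l2 * l1hat) :
    |w2 * l2hat - l2| < |l2hat - l2| ↔ (y - l1hat - l2hat) * g < 0 := by
  have hd : l1hat - l2hat ≠ 0 := sub_ne_zero.mpr hne
  have hdiff : (l2hat - l2) - (w2 * l2hat - l2)
      = l2hat * (y - l1hat - l2hat) / (l1hat - l2hat) := by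
    rw [hw]; field_simp; ring
  have hsum : (l2hat - l2) + (w2 * l2hat - l2) = -g / (l1hat - l2hat) := by
    rw [hw, hg]; field_simp; ring
  have hprod : (l2hat - l2 - (w2 * l2hat - l2)) * (l2hat - l2 + (w2 * l2hat - l2))
      = l2hat * -((y - l1hat - l2hat) * g) / (l1hat - l2hat) ^ 2 := by
    rw [hdiff, hsum]; field_simp
  rw [abs_lt_abs_iff_mul_pos, hprod, div_pos_iff_of_pos_right (by positivity),
    mul_pos_iff_of_pos_left hpos, neg_pos]
end

section
/- Let $l_1, l_2, \hat{l}_1, \hat{l}_2 > 0$ with $y = l_1 + l_2$, $\hat{l}_1 > \hat{l}_2$, and $\frac{l_1+l_2}{2} < \hat{l}_1 < l_1$. Define $g(x) = x^2 + x(y - 3\hat{l}_1 - 2l_2) + 2 l_2 \hat{l}_1$. Then $g(l_2) > 0$ and $g(y - \hat{l}_1) < 0$, hence there exists a unique $l_{20}^* \in (l_2, y - \hat{l}_1)$ with $g(l_{20}^*) = 0$, and moreover $y - \hat{l}_1 < \frac{l_1 + l_2}{2}$. -/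
/-!
At the two endpoints `g l2 = l2 (l1 - l̂1) > 0` and `g (y - l̂1) = 2 (l1 - l̂1) (l1 + l2 - 2 l̂1) < 0`,
so the intermediate value theorem gives a zero in between. It is unique because `g` is convex:
a convex function that vanishes at `u` and is negative at `b > u` is negative on all of `(u, b)`.
-/

open Set

theorem ConvexOn.neg_of_nonpos_of_neg {s : Set ℝ} {f : ℝ → ℝ} (hf : ConvexOn ℝ s f)
    {u v b : ℝ} (hu : u ∈ s) (hb : b ∈ s) (huv : u < v) (hvb : v < b)
    (hfu : f u ≤ 0) (hfb : f b < 0) : f v < 0 := by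
  by_contra! hfv
  have hslope := hf.slope_mono_adjacent hu hb huv hvb
  have hleft : 0 ≤ (f v - f u) / (v - u) := div_nonneg (by linarith) (by linarith)
  have hright : (f b - f v) / (b - v) < 0 := div_neg_of_neg_of_pos (by linarith) (by linarith)
  linarith

theorem ConvexOn.existsUnique_mem_Ioo_eq_zero {f : ℝ → ℝ} {a b : ℝ} (hab : a ≤ b)
    (hf : ConvexOn ℝ (Icc a b) f) (hcont : ContinuousOn f (Icc a b))
    (hfa : 0 < f a) (hfb : f b < 0) : ∃! x, x ∈ Ioo a b ∧ f x = 0 := by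
  obtain ⟨x, hx, hfx⟩ := intermediate_value_Ioo' hab hcont ⟨hfb, hfa⟩
  have hb : b ∈ Icc a b := right_mem_Icc.2 hab
  refine ⟨x, ⟨hx, hfx⟩, fun x' ⟨hx', hfx'⟩ => ?_⟩
  rcases lt_trichotomy x' x with hlt | heq | hgt
  · exact absurd hfx (hf.neg_of_nonpos_of_neg (Ioo_subset_Icc_self hx') hb hlt hx.2
      hfx'.le hfb).ne
  · exact heq
  · exact absurd hfx' (hf.neg_of_nonpos_of_neg (Ioo_subset_Icc_self hx) hb hgt hx'.2
      hfx.le hfb).ne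

theorem convexOn_sq_add_mul_add (p q : ℝ) : ConvexOn ℝ univ fun x : ℝ => x ^ 2 + x * p + q :=
  (((Even.convexOn_pow (𝕜 := ℝ) even_two).add
    (((LinearMap.mul ℝ ℝ).flip p).convexOn convex_univ)).add_const q :)

theorem stmt_10_general (l1 l2 l1hat y : ℝ)
    (h2 : l2 > 0)
    (hy : y = l1 + l2)
    (hlo : (l1 + l2) / 2 < l1hat) (hhi : l1hat < l1)
    (g : ℝ → ℝ) (hg : ∀ x, g x = x ^ 2 + x * (y - 3 * l1hat - 2 * l2) + 2 * l2 * l1hat) :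
    g l2 > 0 ∧ g (y - l1hat) < 0 ∧
    (∃! x, x ∈ Set.Ioo l2 (y - l1hat) ∧ g x = 0) ∧
    y - l1hat < (l1 + l2) / 2 := by
  have hg_left : g l2 = l2 * (l1 - l1hat) := by rw [hg, hy]; ring
  have hg_right : g (y - l1hat) = 2 * (l1 - l1hat) * (l1 + l2 - 2 * l1hat) := by rw [hg, hy]; ring
  have hpos : g l2 > 0 := hg_left ▸ mul_pos h2 (by linarith)
  have hneg : g (y - l1hat) < 0 :=
    hg_right ▸ mul_neg_of_pos_of_neg (by linarith) (by linarith)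
  have hconv : ConvexOn ℝ univ g := funext hg ▸ convexOn_sq_add_mul_add _ _
  have hcont : Continuous g := by rw [funext hg]; fun_prop
  refine ⟨hpos, hneg, ?_, by linarith⟩
  exact (hconv.subset (subset_univ _) (convex_Icc _ _)).existsUnique_mem_Ioo_eq_zero
    (by linarith) hcont.continuousOn hpos hneg

theorem stmt_10 (l1 l2 l1hat l2hat y : ℝ)
    (h1 : l1 > 0) (h2 : l2 > 0) (h3 : l1hat > 0) (h4 : l2hat > 0)
    (hy : y = l1 + l2) (hord : l1hat > l2hat)
    (hlo : (l1 + l2) / 2 < l1hat) (hhi : l1hat < l1)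
    (g : ℝ → ℝ) (hg : ∀ x, g x = x ^ 2 + x * (y - 3 * l1hat - 2 * l2) + 2 * l2 * l1hat) :
    g l2 > 0 ∧ g (y - l1hat) < 0 ∧
    (∃! x, x ∈ Set.Ioo l2 (y - l1hat) ∧ g x = 0) ∧
    y - l1hat < (l1 + l2) / 2 :=
  stmt_10_general l1 l2 l1hat y h2 hy hlo hhi g hg
end

section
/- Let $\hat{l}_1, \hat{l}_2 > 0$ and real numbers $l_1, l_2$ with $y = l_1 + l_2$, $\hat{l}_1 \neq \hat{l}_2$, and let $w^* = (y - 2\hat{l}_2)/(\hat{l}_1 - \hat{l}_2)$, $w_2^* = 2 - w^*$. If both components are under-estimated, i.e. $\hat{l}_1 < l_1$ and $\hat{l}_2 < l_2$, or both over-estimated, i.e. $\hat{l}_1 > l_1$ and $\hat{l}_2 > l_2$, then it is impossible that simultaneously $|w^*\hat{l}_1 - l_1| < |\hat{l}_1 - l_1|$ and $|w_2^*\hat{l}_2 - l_2| < |\hat{l}_2 - l_2|$. -/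
/-!
Since `w₁ + w₂ = 2`, re-weighting moves the two estimates in opposite directions:
`w₁ l̂₁ - l̂₁ = (w₁ - 1) l̂₁` and `w₂ l̂₂ - l̂₂ = (1 - w₁) l̂₂`. When both estimates err on the
same side of their targets, whichever component is pushed away from its target gets a
larger error, so the two errors cannot both shrink.
-/

section

variable {R : Type*} [Ring R] [LinearOrder R] [IsOrderedRing R] {a l w : R}

theorem abs_sub_le_abs_mul_sub_of_le (ha : 0 ≤ a) (hal : a ≤ l) (hw : w ≤ 1) :
    |a - l| ≤ |w * a - l| :=
  abs_le_abs_of_nonpos (sub_nonpos.2 hal) (sub_le_sub_right (mul_le_of_le_one_left ha hw) l)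

theorem abs_sub_le_abs_mul_sub_of_ge (ha : 0 ≤ a) (hla : l ≤ a) (hw : 1 ≤ w) :
    |a - l| ≤ |w * a - l| :=
  abs_le_abs_of_nonneg (sub_nonneg.2 hla) (sub_le_sub_right (le_mul_of_one_le_left ha hw) l)

end

theorem stmt_16_general (l1 l2 l1hat l2hat wstar w2star : ℝ)
    (h1 : l1hat > 0) (h2 : l2hat > 0) (hw2 : w2star = 2 - wstar)
    (hsame : (l1hat < l1 ∧ l2hat < l2) ∨ (l1hat > l1 ∧ l2hat > l2)) :
    ¬(|wstar * l1hat - l1| < |l1hat - l1| ∧ |w2star * l2hat - l2| < |l2hat - l2|) := by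
  rintro ⟨hbetter1, hbetter2⟩
  rcases hsame with ⟨hl1, hl2⟩ | ⟨hl1, hl2⟩ <;> rcases le_total wstar 1 with hw | hw
  · exact (abs_sub_le_abs_mul_sub_of_le h1.le hl1.le hw).not_gt hbetter1
  · exact (abs_sub_le_abs_mul_sub_of_le h2.le hl2.le (by linarith)).not_gt hbetter2
  · exact (abs_sub_le_abs_mul_sub_of_ge h2.le hl2.le (by linarith)).not_gt hbetter2
  · exact (abs_sub_le_abs_mul_sub_of_ge h1.le hl1.le hw).not_gt hbetter1

theorem stmt_16 (l1 l2 l1hat l2hat y wstar w2star : ℝ)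
    (h1 : l1hat > 0) (h2 : l2hat > 0) (hy : y = l1 + l2) (hne : l1hat ≠ l2hat)
    (hw : wstar = (y - 2 * l2hat) / (l1hat - l2hat)) (hw2 : w2star = 2 - wstar)
    (hsame : (l1hat < l1 ∧ l2hat < l2) ∨ (l1hat > l1 ∧ l2hat > l2)) :
    ¬(|wstar * l1hat - l1| < |l1hat - l1| ∧ |w2star * l2hat - l2| < |l2hat - l2|) :=
  stmt_16_general l1 l2 l1hat l2hat wstar w2star h1 h2 hw2 hsame
end
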